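/- arXiv:0812.4471 — 2 statements merged into one kernel-verified Lean document; each statement's English description precedes it below -/
import Mathlib

section
/- Let g_1, …, g_n be independent unit-rate exponential random variables, let w_1, …, w_n be positive real numbers, and let θ : (0,∞) → (0,∞) be a function such that θ(ω) → 0 as ω → ∞ and lim_{ω→∞} log θ(ω) / log ω = θ_∞ (so θ_∞ ≤ 0). Then limsup_{ω→∞} log P[∑_{k=1}^n w_k g_k < θ(ω)] / log ω ≤ n · θ_∞. -/
open MeasureTheory ProbabilityTheory Filter

/-- A real random variable `g` is unit-rate exponential (w.r.t. measure `ℙ`) if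
`ℙ[g > x] = e^{-x}` for all `x ≥ 0`. -/
def IsUnitExp {Ω : Type*} [MeasureSpace Ω] (g : Ω → ℝ) : Prop :=
  ∀ x : ℝ, 0 ≤ x → ℙ {ω | x < g ω} = ENNReal.ofReal (Real.exp (-x))

/-!
For small `t`, the event `∑ k, w k * g k < t` is sandwiched between the boxes
`⋂ k, {g k ≤ t / (2 n w k)}` and (since the `g k` are a.s. positive) `⋂ k, {g k < t / w k}`,
whose probabilities factor by independence. Since `P[g ≤ c] = 1 - e^{-c}` is comparable to `c` for `c ∈ [0, 1]`, this gives
`c t^n ≤ P[∑ k, w k * g k < t] ≤ C t^n` with constants `0 < c ≤ C`. Taking `t = θ(ω)` and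
logarithms, `log P / log ω` is squeezed between `(log c + n log θ) / log ω` and
`(log C + n log θ) / log ω`, both of which tend to `n θ_∞`. The lower bound is needed even
for the limsup: it keeps `P` positive (`log 0 = 0`) and bounds the quotient from below, without
which the real-valued `limsup` would be a junk value.
-/

open Real

lemma div_exp_one_le_one_sub_exp_neg {c : ℝ} (hc0 : 0 ≤ c) (hc1 : c ≤ 1) :
    c / exp 1 ≤ 1 - exp (-c) := by
  have h₁ : c * exp (-c) ≤ 1 - exp (-c) := by
    calc c * exp (-c) = (c + 1) * exp (-c) - exp (-c) := by ring
      _ ≤ exp c * exp (-c) - exp (-c) := by gcongr; exact add_one_le_exp c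
      _ = 1 - exp (-c) := by rw [← exp_add, add_neg_cancel, exp_zero]
  calc c / exp 1 = c * exp (-1) := by rw [exp_neg, div_eq_mul_inv]
    _ ≤ c * exp (-c) := by gcongr
    _ ≤ 1 - exp (-c) := h₁

namespace IsUnitExp

variable {Ω : Type*} [MeasureSpace Ω] [IsProbabilityMeasure (ℙ : Measure Ω)] {g : Ω → ℝ}

lemma measure_le_toReal (hm : Measurable g) (he : IsUnitExp g) {c : ℝ} (hc : 0 ≤ c) :
    (ℙ {ω | g ω ≤ c}).toReal = 1 - exp (-c) := by
  have hcompl : {ω | g ω ≤ c} = {ω | c < g ω}ᶜ := by ext ω; simp [not_lt]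
  rw [hcompl, prob_compl_eq_one_sub (measurableSet_lt measurable_const hm), he c hc,
    ENNReal.toReal_sub_of_le (ENNReal.ofReal_le_one.2 (exp_le_one_iff.2 (by linarith)))
      ENNReal.one_ne_top, ENNReal.toReal_one, ENNReal.toReal_ofReal (exp_pos _).le]

lemma measure_lt_toReal_le (hm : Measurable g) (he : IsUnitExp g) {c : ℝ} (hc : 0 ≤ c) :
    (ℙ {ω | g ω < c}).toReal ≤ c := by
  calc (ℙ {ω | g ω < c}).toReal ≤ (ℙ {ω | g ω ≤ c}).toReal :=
        ENNReal.toReal_mono (measure_ne_top _ _)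
          (measure_mono (Set.ofPred_subset_ofPred.2 fun _ h => h.le))
    _ = 1 - exp (-c) := he.measure_le_toReal hm hc
    _ ≤ c := by linarith [add_one_le_exp (-c)]

lemma div_exp_one_le_measure_le_toReal (hm : Measurable g) (he : IsUnitExp g) {c : ℝ}
    (hc0 : 0 ≤ c) (hc1 : c ≤ 1) : c / exp 1 ≤ (ℙ {ω | g ω ≤ c}).toReal := by
  rw [he.measure_le_toReal hm hc0]
  exact div_exp_one_le_one_sub_exp_neg hc0 hc1

lemma ae_pos (hm : Measurable g) (he : IsUnitExp g) : ∀ᵐ ω ∂(ℙ : Measure Ω), 0 < g ω := by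
  have h : ℙ {ω | 0 < g ω} = 1 := by simpa using he 0 le_rfl
  have hs : MeasurableSet {ω | 0 < g ω} := measurableSet_lt measurable_const hm
  exact ae_iff.2 ((prob_compl_eq_zero_iff (μ := ℙ) hs).2 h)

end IsUnitExp

section WeightedSum

variable {Ω : Type*} [MeasureSpace Ω] [IsProbabilityMeasure (ℙ : Measure Ω)]
  {ι : Type*} [Fintype ι] {g : ι → Ω → ℝ} {w : ι → ℝ}

lemma measure_weighted_sum_lt_toReal_le (hm : ∀ k, Measurable (g k))
    (hindep : iIndepFun g ℙ) (he : ∀ k, IsUnitExp (g k)) (hw : ∀ k, 0 < w k)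
    {t : ℝ} (ht : 0 ≤ t) :
    (ℙ {ω | ∑ k, w k * g k ω < t}).toReal ≤ (∏ k, w k)⁻¹ * t ^ Fintype.card ι := by
  have hbox : ℙ {ω | ∑ k, w k * g k ω < t} ≤ ℙ (⋂ k, {ω | g k ω < t / w k}) := by
    refine measure_mono_ae ?_
    filter_upwards [ae_all_iff.2 fun k => (he k).ae_pos (hm k)]
      with ω hpos (hsum : ∑ k, w k * g k ω < t)
    refine Set.mem_iInter.2 fun k => show g k ω < t / w k from ?_
    rw [lt_div_iff₀ (hw k), mul_comm]
    exact (Finset.single_le_sum (fun j _ => mul_nonneg (hw j).le (hpos j).le)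
      (Finset.mem_univ k)).trans_lt hsum
  calc (ℙ {ω | ∑ k, w k * g k ω < t}).toReal
      ≤ (ℙ (⋂ k, {ω | g k ω < t / w k})).toReal :=
        ENNReal.toReal_mono (measure_ne_top _ _) hbox
    _ = ∏ k, (ℙ {ω | g k ω < t / w k}).toReal := by
        rw [hindep.meas_iInter (s := fun k => {ω | g k ω < t / w k})
          fun k => ⟨_, measurableSet_Iio, rfl⟩, ENNReal.toReal_prod]
    _ ≤ ∏ k, t / w k := Finset.prod_le_prod (fun _ _ => ENNReal.toReal_nonneg) fun k _ =>
        (he k).measure_lt_toReal_le (hm k) (div_nonneg ht (hw k).le)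
    _ = (∏ k, w k)⁻¹ * t ^ Fintype.card ι := by
        rw [Finset.prod_div_distrib, Finset.prod_const, Finset.card_univ, div_eq_inv_mul]

lemma le_measure_weighted_sum_lt_toReal (hm : ∀ k, Measurable (g k))
    (hindep : iIndepFun g ℙ) (he : ∀ k, IsUnitExp (g k)) (hw : ∀ k, 0 < w k)
    {t : ℝ} (ht : 0 < t) (hsmall : ∀ k, t ≤ 2 * Fintype.card ι * w k) :
    ((2 * exp 1 * Fintype.card ι) ^ Fintype.card ι * ∏ k, w k)⁻¹ * t ^ Fintype.card ι
      ≤ (ℙ {ω | ∑ k, w k * g k ω < t}).toReal := by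
  rcases isEmpty_or_nonempty ι with hι | hι
  · simp [ht]
  set n : ℝ := (Fintype.card ι : ℝ)
  have hn : 0 < n := Nat.cast_pos.2 Fintype.card_pos
  set c : ι → ℝ := fun k => t / (2 * n * w k)
  have hc0 : ∀ k, 0 ≤ c k := fun k => div_nonneg ht.le (by have := hw k; positivity)
  have hc1 : ∀ k, c k ≤ 1 := fun k =>
    div_le_one_of_le₀ (hsmall k) (by have := hw k; positivity)
  have hbox : ⋂ k, {ω | g k ω ≤ c k} ⊆ {ω | ∑ k, w k * g k ω < t} := by
    intro ω hω
    simp only [Set.mem_iInter, Set.mem_ofPred_eq] at hω ⊢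
    calc ∑ k, w k * g k ω ≤ ∑ k, w k * c k :=
          Finset.sum_le_sum fun k _ => mul_le_mul_of_nonneg_left (hω k) (hw k).le
      _ = n * (t / (2 * n)) := by
          rw [Finset.sum_congr rfl fun k _ => show w k * c k = t / (2 * n) by
            simp only [c]; field_simp [(hw k).ne']]
          rw [Finset.sum_const, Finset.card_univ, nsmul_eq_mul]
      _ < t := by field_simp; linarith
  calc ((2 * exp 1 * n) ^ Fintype.card ι * ∏ k, w k)⁻¹ * t ^ Fintype.card ι
      = ∏ k, c k / exp 1 := by
        simp only [c, Finset.prod_div_distrib, Finset.prod_mul_distrib, Finset.prod_const,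
          Finset.card_univ, mul_pow]
        have : ∏ k, w k ≠ 0 := Finset.prod_ne_zero_iff.2 fun k _ => (hw k).ne'
        field_simp
    _ ≤ ∏ k, (ℙ {ω | g k ω ≤ c k}).toReal := Finset.prod_le_prod
        (fun k _ => div_nonneg (hc0 k) (exp_pos 1).le) fun k _ =>
        (he k).div_exp_one_le_measure_le_toReal (hm k) (hc0 k) (hc1 k)
    _ = (ℙ (⋂ k, {ω | g k ω ≤ c k})).toReal := by
        rw [hindep.meas_iInter (s := fun k => {ω | g k ω ≤ c k})
          fun k => ⟨_, measurableSet_Iic, rfl⟩, ENNReal.toReal_prod]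
    _ ≤ (ℙ {ω | ∑ k, w k * g k ω < t}).toReal :=
        ENNReal.toReal_mono (measure_ne_top _ _) (measure_mono hbox)

end WeightedSum

lemma tendsto_log_mul_pow_div_log {θ : ℝ → ℝ} {a L : ℝ} (ha : a ≠ 0) (n : ℕ)
    (hθ : ∀ᶠ x in atTop, 0 < θ x)
    (hL : Tendsto (fun x => log (θ x) / log x) atTop (nhds L)) :
    Tendsto (fun x => log (a * θ x ^ n) / log x) atTop (nhds (n * L)) := by
  have h := ((tendsto_const_nhds (x := log a)).div_atTop tendsto_log_atTop).add
    (hL.const_mul (n : ℝ))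
  rw [zero_add] at h
  refine h.congr' ?_
  filter_upwards [hθ] with x hx
  rw [log_mul ha (pow_ne_zero _ hx.ne'), log_pow, add_div, mul_div_assoc]

lemma tendsto_log_div_log_of_le_of_le {p θ : ℝ → ℝ} {c C L : ℝ} {n : ℕ} (hc : 0 < c)
    (hθ : ∀ᶠ x in atTop, 0 < θ x)
    (hlow : ∀ᶠ x in atTop, c * θ x ^ n ≤ p x) (hup : ∀ᶠ x in atTop, p x ≤ C * θ x ^ n)
    (hL : Tendsto (fun x => log (θ x) / log x) atTop (nhds L)) :
    Tendsto (fun x => log (p x) / log x) atTop (nhds (n * L)) := by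
  have hC : C ≠ 0 := by
    obtain ⟨x, hx, hlo, hhi⟩ := (hθ.and (hlow.and hup)).exists
    rintro rfl
    have := pow_pos hx n
    nlinarith
  have hsandwich : ∀ᶠ x in atTop,
      log (c * θ x ^ n) / log x ≤ log (p x) / log x ∧
        log (p x) / log x ≤ log (C * θ x ^ n) / log x := by
    filter_upwards [hθ, hlow, hup, eventually_gt_atTop 1] with x hx hlo hhi hx1
    have hcθ : 0 < c * θ x ^ n := by positivity
    exact ⟨div_le_div_of_nonneg_right (log_le_log hcθ hlo) (log_pos hx1).le,
      div_le_div_of_nonneg_right (log_le_log (hcθ.trans_le hlo) hhi) (log_pos hx1).le⟩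
  exact tendsto_of_tendsto_of_tendsto_of_le_of_le' (tendsto_log_mul_pow_div_log hc.ne' n hθ hL)
    (tendsto_log_mul_pow_div_log hC n hθ hL) (hsandwich.mono fun _ h => h.1)
    (hsandwich.mono fun _ h => h.2)

/-- if `g_1, …, g_n` are independent unit-rate exponential random variables,
`w_1, …, w_n > 0`, and `θ : (0,∞) → (0,∞)` satisfies `θ(ω) → 0` as `ω → ∞` and
`log θ(ω) / log ω → θ_∞`, then
`limsup_{ω→∞} log P[∑ k, w k * g k < θ(ω)] / log ω ≤ n * θ_∞`. -/
theorem weighted_exp_sum_lower_tail_exponent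
    {Ω : Type*} [MeasureSpace Ω] [IsProbabilityMeasure (ℙ : Measure Ω)]
    (n : ℕ) (g : Fin n → Ω → ℝ) (w : Fin n → ℝ)
    (hmeas : ∀ k, Measurable (g k))
    (hindep : iIndepFun g ℙ)
    (hexp : ∀ k, IsUnitExp (g k))
    (hw : ∀ k, 0 < w k)
    (θ : ℝ → ℝ) (θinf : ℝ)
    (hθpos : ∀ x : ℝ, 0 < x → 0 < θ x)
    (hθ0 : Tendsto θ atTop (nhds 0))
    (hθexp : Tendsto (fun x : ℝ => Real.log (θ x) / Real.log x) atTop (nhds θinf)) :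
    limsup (fun x : ℝ =>
        Real.log (ℙ {ω | ∑ k, w k * g k ω < θ x}).toReal / Real.log x) atTop
      ≤ (n : ℝ) * θinf := by
  have hθ_pos : ∀ᶠ x in atTop, 0 < θ x := (eventually_gt_atTop 0).mono hθpos
  have hθ_small : ∀ᶠ x in atTop, ∀ k, θ x ≤ 2 * Fintype.card (Fin n) * w k :=
    eventually_all.2 fun k => hθ0.eventually <| ge_mem_nhds <| by
      rw [Fintype.card_fin]; exact mul_pos (mul_pos two_pos (Nat.cast_pos.2 k.pos)) (hw k)
  have hc : 0 < ((2 * exp 1 * Fintype.card (Fin n)) ^ Fintype.card (Fin n) * ∏ k, w k)⁻¹ := by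
    have := Finset.prod_pos fun k (_ : k ∈ Finset.univ) => hw k
    rw [Fintype.card_fin]
    rcases n.eq_zero_or_pos with rfl | hn
    · simp
    · positivity
  have hlim := tendsto_log_div_log_of_le_of_le hc hθ_pos
    ((hθ_pos.and hθ_small).mono fun x hx =>
      le_measure_weighted_sum_lt_toReal hmeas hindep hexp hw hx.1 hx.2)
    (hθ_pos.mono fun x hx => measure_weighted_sum_lt_toReal_le hmeas hindep hexp hw hx.le) hθexp
  rw [Fintype.card_fin] at hlim
  exact hlim.limsup_eq.le
end

section
/- For k = 1, …, n let G_k and H_k be unit-rate exponential random variables, all 2n of them mutually independent, and let c_k, d_k > 0. Then for every θ > 0, P[max_{1≤k≤n} (c_k/G_k + d_k/H_k)^{-1} < θ] ≤ (2θ)^n · ∏_{k=1}^n (c_k + d_k). -/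
open MeasureTheory ProbabilityTheory

/-!
If the harmonic metric `(c/G + d/H)⁻¹` of a relay is below `θ`, then `G < 2θc` or `H < 2θd`,
since otherwise each of `c/G` and `d/H` is at most `1/(2θ)`. By the union bound and
`1 - e^{-x} ≤ x`, this happens with probability at most `2θ(c + d)`. These events are independent
across relays, because the pairs `(G_k, H_k)` are, so the probability that all relays fail
is at most the product of these bounds.
-/

namespace ProbabilityTheory

variable {Ω ι κ : Type*} {mΩ : MeasurableSpace Ω} {μ : Measure Ω}

theorem iIndep.iSup_fiber {m : ι → MeasurableSpace Ω} (hle : ∀ i, m i ≤ mΩ)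
    (h : iIndep m μ) (p : ι → κ) : iIndep (fun j ↦ ⨆ i ∈ p ⁻¹' {j}, m i) μ := by
  classical
  have := h.isProbabilityMeasure
  rw [iIndep_iff]
  intro s
  induction s using Finset.induction_on with
  | empty => simp
  | insert j s hj ih =>
    intro f hf
    have hind : Indep (⨆ i ∈ p ⁻¹' {j}, m i) (⨆ i ∈ p ⁻¹' s, m i) μ :=
      indep_iSup_of_disjoint hle h (Set.disjoint_left.2 fun i hi hi' ↦ hj (by simp_all))
    have hfs : MeasurableSet[⨆ i ∈ p ⁻¹' s, m i] (⋂ k ∈ s, f k) :=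
      Finset.measurableSet_biInter _ fun k hk ↦
        iSup₂_le (fun i hi ↦ le_biSup m (by simp_all)) _ (hf k (Finset.mem_insert_of_mem hk))
    rw [Finset.set_biInter_insert, Finset.prod_insert hj,
      (Indep_iff _ _ _).1 hind _ _ (hf j (Finset.mem_insert_self j s)) hfs,
      ih fun k hk ↦ hf k (Finset.mem_insert_of_mem hk)]

theorem iIndepFun.prodMk_of_sumElim {β : Type*} [MeasurableSpace β] {f g : κ → Ω → β}
    (hf : ∀ k, Measurable (f k)) (hg : ∀ k, Measurable (g k))
    (h : iIndepFun (Sum.elim f g) μ) : iIndepFun (fun k ω ↦ (f k ω, g k ω)) μ := by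
  have hfiber : ∀ k, (⨆ i ∈ Sum.elim id id ⁻¹' {k}, MeasurableSpace.comap (Sum.elim f g i) ‹_›)
      = MeasurableSpace.comap (f k) ‹_› ⊔ MeasurableSpace.comap (g k) ‹_› := by
    intro k
    refine le_antisymm (iSup₂_le ?_) (sup_le ?_ ?_)
    · rintro (i | i) rfl
      exacts [le_sup_left, le_sup_right]
    · exact le_biSup (fun i ↦ MeasurableSpace.comap (Sum.elim f g i) ‹_›)
        (show Sum.inl k ∈ Sum.elim id id ⁻¹' {k} from rfl)
    · exact le_biSup (fun i ↦ MeasurableSpace.comap (Sum.elim f g i) ‹_›)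
        (show Sum.inr k ∈ Sum.elim id id ⁻¹' {k} from rfl)
  have hle : ∀ i, MeasurableSpace.comap (Sum.elim f g i) ‹_› ≤ mΩ := by
    rintro (i | i)
    exacts [(hf i).comap_le, (hg i).comap_le]
  have hpairs := h.iIndep.iSup_fiber hle (Sum.elim id id)
  simp only [hfiber] at hpairs
  rw [iIndepFun_iff_iIndep]
  convert hpairs using 2 with k
  exact MeasurableSpace.comap_prodMk _ _

end ProbabilityTheory

lemma lt_or_lt_of_inv_div_add_div_lt {c d x y θ : ℝ} (hc : 0 < c) (hd : 0 < d) (hθ : 0 < θ)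
    (h : (c / x + d / y)⁻¹ < θ) : x < 2 * θ * c ∨ y < 2 * θ * d := by
  by_contra! hxy
  obtain ⟨hx, hy⟩ := hxy
  have hx0 : 0 < x := lt_of_lt_of_le (by positivity) hx
  have hy0 : 0 < y := lt_of_lt_of_le (by positivity) hy
  have hcx : c / x ≤ (2 * θ)⁻¹ := by
    rw [div_le_iff₀ hx0]
    field_simp
    linarith
  have hdy : d / y ≤ (2 * θ)⁻¹ := by
    rw [div_le_iff₀ hy0]
    field_simp
    linarith
  have hpos : 0 < c / x + d / y := by positivity
  refine h.not_ge ((le_inv_comm₀ hθ hpos).2 ?_)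
  calc c / x + d / y ≤ (2 * θ)⁻¹ + (2 * θ)⁻¹ := add_le_add hcx hdy
    _ = θ⁻¹ := by field_simp; ring

section UnitExp

variable {Ω : Type*} [MeasureSpace Ω] [IsProbabilityMeasure (ℙ : Measure Ω)]

theorem IsUnitExp.measure_lt_le {g : Ω → ℝ} (hg : IsUnitExp g) (hmeas : Measurable g)
    {x : ℝ} (hx : 0 ≤ x) : ℙ {ω | g ω < x} ≤ ENNReal.ofReal x :=
  calc ℙ {ω | g ω < x} ≤ ℙ {ω | x < g ω}ᶜ := measure_mono fun ω (hlt : g ω < x) (hgt : x < g ω) ↦ lt_asymm hlt hgt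
    _ = 1 - ENNReal.ofReal (Real.exp (-x)) := by
      rw [prob_compl_eq_one_sub (measurableSet_lt measurable_const hmeas), hg x hx]
    _ = ENNReal.ofReal (1 - Real.exp (-x)) := by
      rw [ENNReal.ofReal_sub _ (Real.exp_nonneg _), ENNReal.ofReal_one]
    _ ≤ ENNReal.ofReal x := ENNReal.ofReal_le_ofReal (by linarith [Real.add_one_le_exp (-x)])

theorem IsUnitExp.measure_lt_or_lt_le {g h : Ω → ℝ} (hg : IsUnitExp g) (hh : IsUnitExp h)
    (hgm : Measurable g) (hhm : Measurable h) {a b : ℝ} (ha : 0 ≤ a) (hb : 0 ≤ b) :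
    ℙ {ω | g ω < a ∨ h ω < b} ≤ ENNReal.ofReal (a + b) :=
  calc ℙ {ω | g ω < a ∨ h ω < b} ≤ ℙ {ω | g ω < a} + ℙ {ω | h ω < b} := measure_union_le _ _
    _ ≤ ENNReal.ofReal a + ENNReal.ofReal b :=
      add_le_add (hg.measure_lt_le hgm ha) (hh.measure_lt_le hhm hb)
    _ = ENNReal.ofReal (a + b) := (ENNReal.ofReal_add ha hb).symm

end UnitExp

/-- for mutually independent unit-rate exponentials `G_k, H_k`
(`k = 1, …, n`) and `c_k, d_k > 0`, for every `θ > 0`,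
`P[max_k (c_k/G_k + d_k/H_k)⁻¹ < θ] ≤ (2θ)^n ∏_k (c_k + d_k)`. -/
theorem max_harmonic_metric_lower_tail
    {Ω : Type*} [MeasureSpace Ω] [IsProbabilityMeasure (ℙ : Measure Ω)]
    (n : ℕ) (hn : 1 ≤ n) (G H : Fin n → Ω → ℝ) (c d : Fin n → ℝ)
    (hGmeas : ∀ k, Measurable (G k)) (hHmeas : ∀ k, Measurable (H k))
    (hindep : iIndepFun (Sum.elim G H) ℙ)
    (hGexp : ∀ k, IsUnitExp (G k)) (hHexp : ∀ k, IsUnitExp (H k))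
    (hc : ∀ k, 0 < c k) (hd : ∀ k, 0 < d k)
    (θ : ℝ) (hθ : 0 < θ) :
    ℙ {ω | Finset.univ.sup' ⟨⟨0, hn⟩, Finset.mem_univ _⟩
            (fun k => (c k / G k ω + d k / H k ω)⁻¹) < θ}
      ≤ ENNReal.ofReal ((2 * θ) ^ n * ∏ k, (c k + d k)) := by
  set B : Fin n → Set Ω := fun k ↦ {ω | G k ω < 2 * θ * c k ∨ H k ω < 2 * θ * d k}
  have hsub : {ω | Finset.univ.sup' ⟨⟨0, hn⟩, Finset.mem_univ _⟩
      (fun k => (c k / G k ω + d k / H k ω)⁻¹) < θ} ⊆ ⋂ k, B k := by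
    intro ω (hω : _ < θ)
    exact Set.mem_iInter.2 fun k ↦ lt_or_lt_of_inv_div_add_div_lt (hc k) (hd k) hθ
      ((Finset.sup'_lt_iff _).1 hω k (Finset.mem_univ k))
  have hBmeas : ∀ k, MeasurableSet[MeasurableSpace.comap (fun ω ↦ (G k ω, H k ω)) inferInstance]
      (B k) := fun k ↦
    ⟨{z | z.1 < 2 * θ * c k ∨ z.2 < 2 * θ * d k},
      (measurableSet_lt measurable_fst measurable_const).union
        (measurableSet_lt measurable_snd measurable_const), rfl⟩
  calc _ ≤ ℙ (⋂ k, B k) := measure_mono hsub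
    _ = ∏ k, ℙ (B k) := (hindep.prodMk_of_sumElim hGmeas hHmeas).meas_iInter hBmeas
    _ ≤ ∏ k, ENNReal.ofReal (2 * θ * c k + 2 * θ * d k) := Finset.prod_le_prod' fun k _ ↦
      (hGexp k).measure_lt_or_lt_le (hHexp k) (hGmeas k) (hHmeas k)
        (by have := hc k; positivity) (by have := hd k; positivity)
    _ = ENNReal.ofReal ((2 * θ) ^ n * ∏ k, (c k + d k)) := by
      rw [← ENNReal.ofReal_prod_of_nonneg fun k _ ↦ by have := hc k; have := hd k; positivity]
      simp_rw [← mul_add, Finset.prod_mul_distrib, Finset.prod_const, Finset.card_univ,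
        Fintype.card_fin, mul_pow]
end
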